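/- arXiv:2005.11651 — 9 statements merged into one kernel-verified Lean document; each statement's English description precedes it below -/
import Mathlib

section
/- Let d ≥ 1 and ε₁ > ε₂ > ⋯ > ε_d > 0, and set z_j = 1/(e^{ε_j}+1) for j ∈ [d]. Define q₁ = z₁ and q_j = (z_j − z_{j−1})/(1 − 2z_{j−1}) for 2 ≤ j ≤ d. If U₁,…,U_d are independent Bernoulli random variables with Pr[U_i = 1] = q_i, then for every j ∈ [d] the XOR U₁ ⊕ U₂ ⊕ ⋯ ⊕ U_j is a Bernoulli random variable with Pr[U₁ ⊕ ⋯ ⊕ U_j = 1] = z_j = 1/(e^{ε_j}+1). -/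
/-!
Write `w(u) = ∏ᵢ (uᵢ ? qᵢ : 1 - qᵢ)` for the product Bernoulli weights. Summing `w` against the
character `u ↦ (-1)^#{i ∈ S | uᵢ}` factorizes coordinatewise, giving `∏_{i ∈ S} (1 - 2qᵢ)`, so
the odd-parity event has probability `(1 - ∏_{i ∈ S} (1 - 2qᵢ)) / 2`. The choice of `q` makes
`(1 - 2qⱼ)(1 - 2zⱼ₋₁) = 1 - 2zⱼ`, so the products `∏_{i ≤ j} (1 - 2qᵢ)` telescope to `1 - 2zⱼ`.
-/

open Finset

section ParityOfBernoulliProduct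

variable {ι R : Type*} [Fintype ι] [DecidableEq ι] [CommRing R]

theorem sum_prod_bernoulli (q : ι → R) :
    ∑ u : ι → Bool, ∏ i, (if u i then q i else 1 - q i) = 1 := by
  rw [← Fintype.prod_sum (fun i (b : Bool) => if b then q i else 1 - q i)]
  simp

theorem sum_prod_bernoulli_mul_neg_one_pow_card (S : Finset ι) (q : ι → R) :
    ∑ u : ι → Bool, (∏ i, (if u i then q i else 1 - q i)) * (-1) ^ #{i ∈ S | u i} =
      ∏ i ∈ S, (1 - 2 * q i) := by
  have hsign : ∀ u : ι → Bool,
      ((-1 : R) ^ #{i ∈ S | u i}) = ∏ i, (if i ∈ S ∧ u i then -1 else 1) := by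
    intro u
    rw [prod_ite, prod_const_one, mul_one, prod_const]
    congr 2
    ext i
    simp
  simp_rw [hsign, ← prod_mul_distrib]
  rw [← Fintype.prod_sum
    (fun i (b : Bool) => (if b then q i else 1 - q i) * (if i ∈ S ∧ b then -1 else 1)),
    ← prod_filter_mul_prod_filter_not univ (· ∈ S), filter_mem_eq_inter, univ_inter]
  rw [prod_eq_one (s := {i | i ∉ S}) fun i hi => by simp [(mem_filter.mp hi).2], mul_one]
  refine prod_congr rfl fun i hi => ?_
  simp only [Fintype.sum_bool, hi, true_and, Bool.false_eq_true, if_true, if_false]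
  ring

theorem two_mul_sum_prod_bernoulli_odd_card (S : Finset ι) (q : ι → R) :
    2 * ∑ u : ι → Bool with Odd #{i ∈ S | u i}, ∏ i, (if u i then q i else 1 - q i) =
      1 - ∏ i ∈ S, (1 - 2 * q i) := by
  calc 2 * ∑ u : ι → Bool with Odd #{i ∈ S | u i}, ∏ i, (if u i then q i else 1 - q i)
      = ∑ u : ι → Bool, ((∏ i, (if u i then q i else 1 - q i)) -
          (∏ i, (if u i then q i else 1 - q i)) * (-1) ^ #{i ∈ S | u i}) := by
        rw [mul_sum, sum_filter]
        refine sum_congr rfl fun u _ => ?_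
        rcases Nat.even_or_odd #{i ∈ S | u i} with h | h
        · simp [h.neg_one_pow, Nat.not_odd_iff_even.mpr h]
        · simp only [h, if_true, h.neg_one_pow]
          ring
    _ = 1 - ∏ i ∈ S, (1 - 2 * q i) := by
        rw [sum_sub_distrib, sum_prod_bernoulli, sum_prod_bernoulli_mul_neg_one_pow_card]

end ParityOfBernoulliProduct

theorem one_sub_two_div_exp_add_one_ne_zero {ε : ℝ} (hε : ε ≠ 0) :
    1 - 2 * (1 / (Real.exp ε + 1)) ≠ 0 := by
  have hexp : Real.exp ε ≠ 1 := by rwa [Ne, Real.exp_eq_one_iff]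
  have hpos : Real.exp ε + 1 ≠ 0 := by positivity
  rw [Ne, sub_eq_zero, mul_one_div, eq_div_iff hpos]
  intro h
  exact hexp (by linarith)

theorem prod_Iic_one_sub_two_mul_of_cascade {d : ℕ} (z q : Fin d → ℝ)
    (hz : ∀ j, 1 - 2 * z j ≠ 0)
    (hq0 : ∀ j : Fin d, j.val = 0 → q j = z j)
    (hqs : ∀ j : Fin d, 0 < j.val →
      q j = (z j - z ⟨j.val - 1, lt_of_le_of_lt (Nat.sub_le _ _) j.isLt⟩) /
        (1 - 2 * z ⟨j.val - 1, lt_of_le_of_lt (Nat.sub_le _ _) j.isLt⟩))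
    (j : Fin d) :
    ∏ i ≤ j, (1 - 2 * q i) = 1 - 2 * z j := by
  obtain ⟨k, hk⟩ := j
  induction k with
  | zero =>
    have hIic : Iic (⟨0, hk⟩ : Fin d) = {⟨0, hk⟩} := by
      ext i
      simp [Fin.le_def, Fin.ext_iff]
    rw [hIic, prod_singleton, hq0 _ rfl]
  | succ k ih =>
    have hIio : Iio (⟨k + 1, hk⟩ : Fin d) = Iic ⟨k, by omega⟩ := by
      ext i
      simp only [mem_Iio, mem_Iic, Fin.lt_def, Fin.le_def]
      omega
    have hq := hqs ⟨k + 1, hk⟩ k.succ_pos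
    simp only [Nat.add_sub_cancel] at hq
    have hzk := hz ⟨k, by omega⟩
    rw [← Iio_insert, prod_insert notMem_Iio_self, hIio, ih, hq]
    field_simp
    ring

open scoped Classical in
theorem stmt6_general (d : ℕ) (ε : Fin d → ℝ)
    (hεpos : ∀ j, 0 < ε j)
    (z q : Fin d → ℝ)
    (hz : ∀ j, z j = 1 / (Real.exp (ε j) + 1))
    (hq0 : ∀ j : Fin d, j.val = 0 → q j = z j)
    (hqs : ∀ j : Fin d, 0 < j.val →
      q j = (z j - z ⟨j.val - 1, lt_of_le_of_lt (Nat.sub_le _ _) j.isLt⟩) /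
        (1 - 2 * z ⟨j.val - 1, lt_of_le_of_lt (Nat.sub_le _ _) j.isLt⟩)) :
    ∀ j : Fin d,
      ∑ u ∈ Finset.univ.filter (fun u : Fin d → Bool =>
          Odd (Finset.univ.filter (fun i : Fin d => i ≤ j ∧ u i = true)).card),
        ∏ i : Fin d, (if u i then q i else 1 - q i) = z j := by
  intro j
  have hz_ne : ∀ i, 1 - 2 * z i ≠ 0 := fun i => by
    rw [hz i]
    exact one_sub_two_div_exp_add_one_ne_zero (hεpos i).ne'
  have hodd := two_mul_sum_prod_bernoulli_odd_card (Iic j) q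
  rw [prod_Iic_one_sub_two_mul_of_cascade z q hz_ne hq0 hqs j] at hodd
  simp_rw [← filter_filter, filter_ge_eq_Iic]
  linarith

open scoped Classical in
/-- **Lemma 4.1 of the paper (key computation):** with `U₁,…,U_d` independent Bernoulli
random variables (modeled by the product measure on `Fin d → Bool`) with
`Pr[U_i = 1] = q_i`, where `q₁ = z₁` and `q_j = (z_j − z_{j−1})/(1 − 2 z_{j−1})`,
the XOR `U₁ ⊕ ⋯ ⊕ U_j` is Bernoulli with success probability `z_j = 1/(e^{ε_j}+1)`. -/
theorem stmt6 (d : ℕ) (hd : 1 ≤ d) (ε : Fin d → ℝ)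
    (hεpos : ∀ j, 0 < ε j)
    (hεdec : ∀ i j : Fin d, i < j → ε j < ε i)
    (z q : Fin d → ℝ)
    (hz : ∀ j, z j = 1 / (Real.exp (ε j) + 1))
    (hq0 : ∀ j : Fin d, j.val = 0 → q j = z j)
    (hqs : ∀ j : Fin d, 0 < j.val →
      q j = (z j - z ⟨j.val - 1, lt_of_le_of_lt (Nat.sub_le _ _) j.isLt⟩) /
        (1 - 2 * z ⟨j.val - 1, lt_of_le_of_lt (Nat.sub_le _ _) j.isLt⟩)) :
    ∀ j : Fin d,
      ∑ u ∈ Finset.univ.filter (fun u : Fin d → Bool =>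
          Odd (Finset.univ.filter (fun i : Fin d => i ≤ j ∧ u i = true)).card),
        ∏ i : Fin d, (if u i then q i else 1 - q i) = z j :=
  stmt6_general d ε hεpos z q hz hq0 hqs
end

section
/- Let X, U, Y be finite sets, let q be a probability distribution on U with q(u) > 0 for all u ∈ U, and let f : X × U → Y be a deterministic map such that (i) the induced kernel Q(y|x) = ∑_{u : f(x,u)=y} q(u) satisfies Q(y|x) ≤ e^ε Q(y|x′) for all x, x′ ∈ X and y ∈ Y for some finite ε ≥ 0, and (ii) for every u ∈ U the map x ↦ f(x,u) is injective (so that X is recoverable from (Y,U)). Then |X| ≤ |f(X × U)| ≤ |U|; in particular, if every element of Y is attained by f then |U| ≥ |Y| ≥ |X|. -/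
/-! An injective row `x ↦ f x u` already puts `|X|` outputs into the range, so `|X| ≤ |f(X × U)|`.
Conversely, the LDP inequality forces all rows of the kernel to have the same support, so every
output in the range is `f x₀ u` for one fixed input `x₀` and some key `u`; hence
`|f(X × U)| ≤ |U|`. -/

open Finset

def IsDist {S : Type*} [Fintype S] (q : S → ℝ) : Prop :=
  (∀ s, 0 ≤ q s) ∧ ∑ s, q s = 1

theorem IsDist.nonempty {S : Type*} [Fintype S] {q : S → ℝ} (hq : IsDist q) : Nonempty S := by
  by_contra h
  rw [not_nonempty_iff] at h
  simpa using hq.2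

theorem exists_of_sum_filter_le_mul_sum_filter {U : Type*} [Fintype U] {q : U → ℝ}
    (hq : ∀ u, 0 < q u) {p p' : U → Prop} [DecidablePred p] [DecidablePred p'] {c : ℝ}
    (h : ∑ u ∈ univ.filter p, q u ≤ c * ∑ u ∈ univ.filter p', q u) {u : U} (hu : p u) :
    ∃ u', p' u' := by
  by_contra! hne
  have hempty : univ.filter p' = ∅ := filter_eq_empty_iff.2 fun u' _ => hne u'
  have hpos : 0 < ∑ u ∈ univ.filter p, q u :=
    sum_pos' (fun v _ => (hq v).le) ⟨u, mem_filter.2 ⟨mem_univ u, hu⟩, hq u⟩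
  rw [hempty, sum_empty, mul_zero] at h
  linarith

section Range

variable {X U Y : Type*} [Fintype X] [Fintype U] [DecidableEq Y] (f : X → U → Y)

theorem card_le_card_image_uncurry [Nonempty U] (hrec : ∀ u, Function.Injective (f · u)) :
    Fintype.card X ≤ (univ.image fun p : X × U => f p.1 p.2).card := by
  obtain ⟨u₀⟩ := ‹Nonempty U›
  calc Fintype.card X = (univ.image (f · u₀)).card := by
        rw [card_image_of_injective _ (hrec u₀), card_univ]
    _ ≤ (univ.image fun p : X × U => f p.1 p.2).card :=
        card_le_card <| image_subset_iff.2 fun x _ => mem_image_of_mem _ (mem_univ (x, u₀))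

theorem card_image_uncurry_le_card (hsupp : ∀ x x' u, ∃ u', f x' u' = f x u) :
    (univ.image fun p : X × U => f p.1 p.2).card ≤ Fintype.card U := by
  cases isEmpty_or_nonempty X with
  | inl hX => simp
  | inr hX =>
    obtain ⟨x₀⟩ := hX
    have hsub : (univ.image fun p : X × U => f p.1 p.2) ⊆ univ.image (f x₀) := by
      rw [image_subset_iff]
      rintro ⟨x, u⟩ -
      obtain ⟨u', hu'⟩ := hsupp x x₀ u
      exact mem_image.2 ⟨u', mem_univ u', hu'⟩
    exact (card_le_card hsub).trans (card_image_le.trans_eq card_univ)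

end Range

theorem stmt8_general (X U Y : Type*) [Fintype X] [Fintype U] [Fintype Y] [DecidableEq Y]
    (ε : ℝ)
    (q : U → ℝ) (hq : IsDist q) (hqpos : ∀ u, 0 < q u)
    (f : X → U → Y)
    (hLDP : ∀ x x' y, (∑ u ∈ Finset.univ.filter (fun u => f x u = y), q u) ≤
      Real.exp ε * ∑ u ∈ Finset.univ.filter (fun u => f x' u = y), q u)
    (hrec : ∀ u, Function.Injective (fun x => f x u)) :
    Fintype.card X ≤ (Finset.image (fun p : X × U => f p.1 p.2) Finset.univ).card ∧
    (Finset.image (fun p : X × U => f p.1 p.2) Finset.univ).card ≤ Fintype.card U ∧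
    (Function.Surjective (fun p : X × U => f p.1 p.2) →
      Fintype.card X ≤ Fintype.card Y ∧ Fintype.card Y ≤ Fintype.card U) := by
  have := hq.nonempty
  have hX := card_le_card_image_uncurry f hrec
  have hU := card_image_uncurry_le_card f fun x x' u =>
    exists_of_sum_filter_le_mul_sum_filter hqpos (hLDP x x' (f x u)) rfl
  refine ⟨hX, hU, fun hsurj => ?_⟩
  rw [image_univ_of_surjective hsurj, card_univ] at hX hU
  exact ⟨hX, hU⟩

/-- **First necessary condition of Theorem 4 of the paper:** for an `ε`-LDP-Rec
mechanism (deterministic map `f : X × U → Y` with full-support key distribution `q`,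
`ε`-LDP induced kernel, and input recoverable from output and key),
`|X| ≤ |f(X × U)| ≤ |U|`; in particular if `f` is onto `Y` then `|U| ≥ |Y| ≥ |X|`. -/
theorem stmt8 (X U Y : Type*) [Fintype X] [Fintype U] [Fintype Y] [DecidableEq Y]
    (ε : ℝ) (hε : 0 ≤ ε)
    (q : U → ℝ) (hq : IsDist q) (hqpos : ∀ u, 0 < q u)
    (f : X → U → Y)
    (hLDP : ∀ x x' y, (∑ u ∈ Finset.univ.filter (fun u => f x u = y), q u) ≤
      Real.exp ε * ∑ u ∈ Finset.univ.filter (fun u => f x' u = y), q u)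
    (hrec : ∀ u, Function.Injective (fun x => f x u)) :
    Fintype.card X ≤ (Finset.image (fun p : X × U => f p.1 p.2) Finset.univ).card ∧
    (Finset.image (fun p : X × U => f p.1 p.2) Finset.univ).card ≤ Fintype.card U ∧
    (Function.Surjective (fun p : X × U => f p.1 p.2) →
      Fintype.card X ≤ Fintype.card Y ∧ Fintype.card Y ≤ Fintype.card U) :=
  stmt8_general X U Y ε q hq hqpos f hLDP hrec
end

section
/- Let k ≥ 1 and ε ≥ 0. Let X, U, Y be finite sets with |X| = |U| = |Y| = k, let q be a probability distribution on U with q(u) > 0 for all u, and let f : X × U → Y be a deterministic map such that (i) the induced kernel Q(y|x) = ∑_{u : f(x,u)=y} q(u) satisfies Q(y|x) ≤ e^ε Q(y|x′) for all x, x′ ∈ X and y ∈ Y, and (ii) f(·,u) is injective for every u ∈ U. Then max_{u ∈ U} q(u) ≤ e^ε · min_{u ∈ U} q(u). -/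
/-!
Since `|X| = |Y|`, each `f(·, u)` is a bijection, so every output `y` is reached from some
input with positive probability; the LDP bound then makes `Q(y | x) > 0` for every `x`, i.e.
each `f(x, ·)` is onto, hence (as `|U| = |Y|`) a bijection. So `Q(f(x, u) | x) = q(u)`, and
comparing `Q(y | x)` with `Q(y | x')` for `y = f(x, u) = f(x', u')` gives `q(u) ≤ e^ε q(u')`.
-/

open Finset

section InducedKernel

variable {X U Y : Type*} [Fintype U] [DecidableEq Y]

def inducedKernel (q : U → ℝ) (f : X → U → Y) (x : X) (y : Y) : ℝ :=
  ∑ u ∈ univ.filter (fun u => f x u = y), q u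

def IsLDP (ε : ℝ) (Q : X → Y → ℝ) : Prop :=
  ∀ x x' y, Q x y ≤ Real.exp ε * Q x' y

variable {q : U → ℝ} {f : X → U → Y}

lemma le_inducedKernel_apply (hq : ∀ u, 0 ≤ q u) (x : X) (u : U) :
    q u ≤ inducedKernel q f x (f x u) :=
  single_le_sum (fun v _ => hq v) (by simp)

lemma inducedKernel_apply_of_injective {x : X} (hf : Function.Injective (f x)) (u : U) :
    inducedKernel q f x (f x u) = q u := by
  have hfiber : univ.filter (fun v => f x v = f x u) = {u} := by
    ext v
    simp [hf.eq_iff]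
  rw [inducedKernel, hfiber, sum_singleton]

lemma exists_apply_eq_of_inducedKernel_pos {x : X} {y : Y} (h : 0 < inducedKernel q f x y) :
    ∃ u, f x u = y := by
  obtain ⟨u, hu, -⟩ := exists_ne_zero_of_sum_ne_zero h.ne'
  exact ⟨u, (mem_filter.mp hu).2⟩

lemma surjective_of_isLDP [Nonempty U] {ε : ℝ} (hq : ∀ u, 0 < q u)
    (hLDP : IsLDP ε (inducedKernel q f))
    (hsurj : ∀ u, Function.Surjective (fun x => f x u)) (x : X) :
    Function.Surjective (f x) := by
  intro y
  obtain ⟨u₀⟩ := ‹Nonempty U›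
  obtain ⟨x₀, rfl⟩ := hsurj u₀ y
  have hpos₀ : 0 < inducedKernel q f x₀ (f x₀ u₀) :=
    (hq u₀).trans_le (le_inducedKernel_apply (fun u => (hq u).le) x₀ u₀)
  have hpos : 0 < inducedKernel q f x (f x₀ u₀) :=
    pos_of_mul_pos_right (hpos₀.trans_le (hLDP x₀ x _)) (Real.exp_pos ε).le
  exact exists_apply_eq_of_inducedKernel_pos hpos

end InducedKernel

theorem stmt9_general (k : ℕ) (ε : ℝ)
    (X U Y : Type*) [Fintype X] [Fintype U] [Fintype Y] [DecidableEq Y]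
    (hX : Fintype.card X = k) (hU : Fintype.card U = k) (hY : Fintype.card Y = k)
    (q : U → ℝ) (hqpos : ∀ u, 0 < q u)
    (f : X → U → Y)
    (hLDP : ∀ x x' y, (∑ u ∈ Finset.univ.filter (fun u => f x u = y), q u) ≤
      Real.exp ε * ∑ u ∈ Finset.univ.filter (fun u => f x' u = y), q u)
    (hrec : ∀ u, Function.Injective (fun x => f x u)) :
    ∀ u u' : U, q u ≤ Real.exp ε * q u' := by
  intro u u'
  have : Nonempty U := ⟨u⟩
  obtain ⟨x⟩ : Nonempty X := Fintype.card_pos_iff.mp (by rw [hX, ← hU]; exact Fintype.card_pos)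
  have hbij (v : U) : Function.Bijective (fun x => f x v) :=
    (Fintype.bijective_iff_injective_and_card _).mpr ⟨hrec v, hX.trans hY.symm⟩
  have hinj (x : X) : Function.Injective (f x) :=
    ((Fintype.bijective_iff_surjective_and_card _).mpr
      ⟨surjective_of_isLDP hqpos hLDP (fun v => (hbij v).2) x, hU.trans hY.symm⟩).1
  obtain ⟨x', hx'⟩ := (hbij u').2 (f x u)
  calc q u = inducedKernel q f x (f x u) := (inducedKernel_apply_of_injective (hinj x) u).symm
    _ ≤ Real.exp ε * inducedKernel q f x' (f x u) := hLDP x x' _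
    _ = Real.exp ε * q u' := by
      rw [← hx', inducedKernel_apply_of_injective (hinj x')]

/-- **Appendix F.2 claim of the paper:** for an `ε`-LDP-Rec mechanism with
`|X| = |U| = |Y| = k`, the largest key probability is at most `e^ε` times the smallest
one (stated as `q u ≤ e^ε q u'` for all keys `u, u'`). -/
theorem stmt9 (k : ℕ) (hk : 1 ≤ k) (ε : ℝ) (hε : 0 ≤ ε)
    (X U Y : Type*) [Fintype X] [Fintype U] [Fintype Y] [DecidableEq Y]
    (hX : Fintype.card X = k) (hU : Fintype.card U = k) (hY : Fintype.card Y = k)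
    (q : U → ℝ) (hq : IsDist q) (hqpos : ∀ u, 0 < q u)
    (f : X → U → Y)
    (hLDP : ∀ x x' y, (∑ u ∈ Finset.univ.filter (fun u => f x u = y), q u) ≤
      Real.exp ε * ∑ u ∈ Finset.univ.filter (fun u => f x' u = y), q u)
    (hrec : ∀ u, Function.Injective (fun x => f x u)) :
    ∀ u u' : U, q u ≤ Real.exp ε * q u' :=
  stmt9_general k ε X U Y hX hU hY q hqpos f hLDP hrec
end

section
/- Let k ≥ 2 and ε > 0, and set l = k(e^ε(ε−1)+1)/(e^ε−1)². For an integer s ∈ [0,k], let q^s be the probability distribution on [k] whose first k−s entries equal 1/(s e^ε + k − s) and whose last s entries equal e^ε/(s e^ε + k − s). Then for every probability distribution q on [k] satisfying max_j q(j) ≤ e^ε · min_j q(j), the Shannon entropy satisfies H(q) ≥ min_{s ∈ {⌈l⌉, ⌊l⌋}} H(q^s). -/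
/-!
Write `q = m (1 + (e^ε - 1) t)` with `m = min q`, so that `t ∈ [0,1]^k` and `t` vanishes at the
minimizer. Since `negMulLog` is concave, the entropy does not increase when two coordinates of `t`
are moved apart with fixed sum until one hits `0` or `1`; this leaves a distribution with
`k - n - 1` entries `m`, `n` entries `m e^ε` and one entry in between. That distribution is a
convex combination of `q^n` and `q^(n+1)`, so by concavity again its entropy is at least
`min (H q^n) (H q^(n+1))`. Finally `s ↦ H(q^s)`, extended to real `s`, has derivative of the sign
of `s - l`, so over consecutive integers it is smallest at `⌊l⌋` or `⌈l⌉`.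
-/

open Finset

/-- Shannon entropy of a function on a finite type (natural log, `0 log 0 = 0`). -/
noncomputable def Hent {S : Type*} [Fintype S] (q : S → ℝ) : ℝ :=
  -∑ s, q s * Real.log (q s)

/-- The distribution `q^s` on `[k]`: the first `k − s` entries are `1/(s e^ε + k − s)`
and the remaining `s` entries are `e^ε/(s e^ε + k − s)`. -/
noncomputable def keyDist (k s : ℕ) (ε : ℝ) : Fin k → ℝ := fun j =>
  if (j : ℕ) < k - s then 1 / ((s : ℝ) * Real.exp ε + ((k - s : ℕ) : ℝ))
  else Real.exp ε / ((s : ℝ) * Real.exp ε + ((k - s : ℕ) : ℝ))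

open Real

section Concavity

variable {𝕜 : Type*} [Field 𝕜] [LinearOrder 𝕜] [IsStrictOrderedRing 𝕜] {f : 𝕜 → 𝕜}

theorem ConcaveOn.map_add_map_le_of_add_eq {s : Set 𝕜} (hf : ConcaveOn 𝕜 s f) {a b x y : 𝕜}
    (ha : a ∈ s) (hb : b ∈ s) (hax : a ≤ x) (hay : a ≤ y) (hxy : x + y = a + b) :
    f a + f b ≤ f x + f y := by
  rcases hax.eq_or_lt with rfl | hax
  · rw [show b = y by linarith]
  rcases hay.eq_or_lt with rfl | hay
  · rw [show b = x by linarith, add_comm]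
  have hx := hf.neg.secant_mono_aux1 ha hb hax (by linarith : x < b)
  have hy := hf.neg.secant_mono_aux1 ha hb hay (by linarith : y < b)
  simp only [Pi.neg_apply] at hx hy
  refine le_of_mul_le_mul_left ?_ (by linarith : 0 < b - a)
  linear_combination hx + hy + (f a - f b) * hxy

theorem ConcaveOn.exists_le_sum_map {ι : Type*} (hf : ConcaveOn 𝕜 (Set.Icc 0 1) f)
    (hf0 : f 0 = 0) {t : ι → 𝕜} (s : Finset ι) (ht : ∀ i ∈ s, t i ∈ Set.Icc 0 1) :
    ∃ n : ℕ, ∃ θ ∈ Set.Icc (0 : 𝕜) 1, n + θ = ∑ i ∈ s, t i ∧ n * f 1 + f θ ≤ ∑ i ∈ s, f (t i) := by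
  classical
  induction s using Finset.induction_on with
  | empty => exact ⟨0, 0, Set.left_mem_Icc.2 zero_le_one, by simp, by simp [hf0]⟩
  | @insert a s ha ih =>
    obtain ⟨n, θ, ⟨hθ0, hθ1⟩, hsum, hle⟩ := ih fun i hi => ht i (Finset.mem_insert_of_mem hi)
    obtain ⟨hta0, hta1⟩ := ht a (Finset.mem_insert_self a s)
    rw [Finset.sum_insert ha, Finset.sum_insert ha]
    by_cases hcarry : θ + t a ≤ 1
    · have := hf.map_add_map_le_of_add_eq (x := θ) (y := t a)
        (Set.left_mem_Icc.2 zero_le_one) ⟨by linarith, hcarry⟩ hθ0 hta0 (zero_add _).symm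
      exact ⟨n, θ + t a, ⟨by linarith, hcarry⟩, by linarith, by linarith⟩
    · have := hf.map_add_map_le_of_add_eq (a := θ + t a - 1) (x := θ) (y := t a)
        ⟨by linarith, by linarith⟩ (Set.right_mem_Icc.2 zero_le_one) (by linarith) (by linarith)
        (by ring)
      refine ⟨n + 1, θ + t a - 1, ⟨by linarith, by linarith⟩, by push_cast; linarith, ?_⟩
      push_cast
      linarith

end Concavity

theorem Hent_eq_sum_negMulLog {S : Type*} [Fintype S] (q : S → ℝ) :
    Hent q = ∑ s, negMulLog (q s) := by
  simp [Hent, negMulLog_eq_neg]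

/-- `H(q^s)` in closed form, extended to real `s`. -/
noncomputable def keyEntropy (k : ℕ) (ε x : ℝ) : ℝ :=
  log (x * (exp ε - 1) + k) - x * ε * exp ε / (x * (exp ε - 1) + k)

noncomputable def keyArgmin (k : ℕ) (ε : ℝ) : ℝ :=
  k * (exp ε * (ε - 1) + 1) / (exp ε - 1) ^ 2

theorem keyEntropy_eq_negMulLog (k : ℕ) (ε x : ℝ) :
    keyEntropy k ε x = (k - x) * negMulLog (x * (exp ε - 1) + k)⁻¹
      + x * negMulLog (exp ε * (x * (exp ε - 1) + k)⁻¹) := by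
  rw [keyEntropy]
  set D := x * (exp ε - 1) + k
  rcases eq_or_ne D 0 with hD | hD
  · simp [hD]
  simp only [negMulLog, log_mul (exp_pos ε).ne' (inv_ne_zero hD), log_inv, log_exp]
  field_simp
  ring

theorem Hent_keyDist {k s : ℕ} (hs : s ≤ k) (ε : ℝ) :
    Hent (keyDist k s ε) = keyEntropy k ε s := by
  have hD : (s : ℝ) * exp ε + ((k - s : ℕ) : ℝ) = s * (exp ε - 1) + k := by
    push_cast [hs]; ring
  rw [Hent_eq_sum_negMulLog, keyEntropy_eq_negMulLog]
  simp only [keyDist, hD, apply_ite negMulLog, Finset.sum_ite, Finset.sum_const, nsmul_eq_mul]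
  have hlt : #{j : Fin k | (j : ℕ) < k - s} = k - s := by
    rw [Fin.card_filter_val_lt]; omega
  have hge : #{j : Fin k | ¬(j : ℕ) < k - s} = s := by
    have := Finset.card_filter_add_card_filter_not (s := Finset.univ)
      fun j : Fin k => (j : ℕ) < k - s
    simp only [Finset.card_univ, Fintype.card_fin] at this
    omega
  rw [hlt, hge, Nat.cast_sub hs, one_div, div_eq_mul_inv]

theorem keyArgmin_nonneg (k : ℕ) (ε : ℝ) : 0 ≤ keyArgmin k ε := by
  have h := add_one_le_exp (-ε)
  have : exp (-ε) * exp ε = 1 := by rw [← exp_add, neg_add_cancel, exp_zero]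
  have : 0 ≤ exp ε * (ε - 1) + 1 := by nlinarith [exp_pos ε]
  unfold keyArgmin
  positivity

theorem keyArgmin_le (k : ℕ) (ε : ℝ) : keyArgmin k ε ≤ k := by
  refine div_le_of_le_mul₀ (sq_nonneg _) k.cast_nonneg ?_
  have := add_one_le_exp ε
  have : exp ε * (ε - 1) + 1 ≤ (exp ε - 1) ^ 2 := by nlinarith [exp_pos ε]
  exact mul_le_mul_of_nonneg_left this k.cast_nonneg

theorem keyDenom_pos {k : ℕ} {ε x : ℝ} (hk : 0 < k) (hε : 0 ≤ ε) (hx : 0 ≤ x) :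
    0 < x * (exp ε - 1) + k := by
  have : 0 ≤ x * (exp ε - 1) := mul_nonneg hx (sub_nonneg.2 (one_le_exp hε))
  have : (0 : ℝ) < k := by exact_mod_cast hk
  linarith

theorem hasDerivAt_keyEntropy {k : ℕ} {ε x : ℝ} (hε : ε ≠ 0) (hx : 0 < x * (exp ε - 1) + k) :
    HasDerivAt (keyEntropy k ε)
      ((exp ε - 1) ^ 2 * (x - keyArgmin k ε) / (x * (exp ε - 1) + k) ^ 2) x := by
  have hc : exp ε - 1 ≠ 0 := sub_ne_zero.2 fun h => hε (exp_eq_one_iff _ |>.1 h)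
  have hD : HasDerivAt (fun y => y * (exp ε - 1) + k) (exp ε - 1) x := by
    simpa using ((hasDerivAt_id x).mul_const (exp ε - 1)).add_const (k : ℝ)
  have hN : HasDerivAt (fun y => y * ε * exp ε) (ε * exp ε) x := by
    simpa [mul_assoc] using (hasDerivAt_id x).mul_const (ε * exp ε)
  refine ((hD.log hx.ne').sub (hN.div hD hx.ne')).congr_deriv ?_
  rw [keyArgmin]
  field_simp
  ring

theorem keyEntropy_antitoneOn {k : ℕ} {ε : ℝ} (hk : 0 < k) (hε : 0 < ε) :
    AntitoneOn (keyEntropy k ε) (Set.Icc 0 (keyArgmin k ε)) := by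
  have hderiv : ∀ x ∈ Set.Icc 0 (keyArgmin k ε), HasDerivAt (keyEntropy k ε) _ x :=
    fun x hx => hasDerivAt_keyEntropy hε.ne' (keyDenom_pos hk hε.le hx.1)
  refine antitoneOn_of_hasDerivWithinAt_nonpos (convex_Icc _ _)
    (fun x hx => (hderiv x hx).continuousAt.continuousWithinAt)
    (fun x hx => (hderiv x (interior_subset hx)).hasDerivWithinAt) fun x hx => ?_
  rw [interior_Icc] at hx
  exact div_nonpos_of_nonpos_of_nonneg
    (mul_nonpos_of_nonneg_of_nonpos (sq_nonneg _) (by linarith [hx.2])) (sq_nonneg _)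

theorem keyEntropy_monotoneOn {k : ℕ} {ε : ℝ} (hk : 0 < k) (hε : 0 < ε) :
    MonotoneOn (keyEntropy k ε) (Set.Ici (keyArgmin k ε)) := by
  have hderiv : ∀ x ∈ Set.Ici (keyArgmin k ε), HasDerivAt (keyEntropy k ε) _ x :=
    fun x hx => hasDerivAt_keyEntropy hε.ne'
      (keyDenom_pos hk hε.le ((keyArgmin_nonneg k ε).trans hx))
  refine monotoneOn_of_hasDerivWithinAt_nonneg (convex_Ici _)
    (fun x hx => (hderiv x hx).continuousAt.continuousWithinAt)
    (fun x hx => (hderiv x (interior_subset hx)).hasDerivWithinAt) fun x hx => ?_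
  rw [interior_Ici] at hx
  exact div_nonneg (mul_nonneg (sq_nonneg _) (by linarith [hx.out])) (sq_nonneg _)

theorem min_ceil_floor_le_of_antitoneOn_of_monotoneOn {F : ℝ → ℝ} {l : ℝ}
    (hanti : AntitoneOn F (Set.Icc 0 l)) (hmono : MonotoneOn F (Set.Ici l)) (n : ℕ) :
    min (F ⌈l⌉₊) (F ⌊l⌋₊) ≤ min (F n) (F (n + 1)) := by
  rcases le_or_gt l n with hln | hnl
  · have hceil : (⌈l⌉₊ : ℝ) ≤ n := by exact_mod_cast Nat.ceil_le.2 hln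
    have hmem : (⌈l⌉₊ : ℝ) ∈ Set.Ici l := Nat.le_ceil l
    refine min_le_of_left_le (le_min ?_ ?_)
    · exact hmono hmem (hmem.trans hceil) hceil
    · exact hmono hmem (by simp only [Set.mem_Ici]; linarith [hmem.out]) (by linarith)
  rcases le_or_gt (n + 1 : ℝ) l with hnl' | hln'
  · have hfloor : (n + 1 : ℝ) ≤ ⌊l⌋₊ := by exact_mod_cast Nat.le_floor (by exact_mod_cast hnl')
    have hmem : (⌊l⌋₊ : ℝ) ∈ Set.Icc 0 l := ⟨Nat.cast_nonneg _, Nat.floor_le (by linarith)⟩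
    refine min_le_of_right_le (le_min ?_ ?_)
    · exact hanti ⟨n.cast_nonneg, by linarith⟩ hmem (by linarith)
    · exact hanti ⟨by positivity, hnl'⟩ hmem hfloor
  · have hfloor : ⌊l⌋₊ = n :=
      (Nat.floor_eq_iff (by linarith [n.cast_nonneg (α := ℝ)])).2 ⟨hnl.le, hln'⟩
    have hceil : ⌈l⌉₊ = n + 1 :=
      (Nat.ceil_eq_iff n.succ_ne_zero).2 ⟨by simpa using hnl, by push_cast; exact hln'.le⟩
    rw [hfloor, hceil, min_comm]
    push_cast
    rfl

theorem exists_le_Hent_of_ratio_le {S : Type*} [Fintype S] {ε : ℝ} (hε : 0 < ε) {q : S → ℝ}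
    (hq : ∑ s, q s = 1) (hratio : ∀ i j, q i ≤ exp ε * q j) :
    ∃ n : ℕ, n + 1 ≤ Fintype.card S ∧ ∃ θ ∈ Set.Icc (0 : ℝ) 1, ∃ m : ℝ,
      m * ((n + θ) * (exp ε - 1) + Fintype.card S) = 1 ∧
      (Fintype.card S - n - 1) * negMulLog m + negMulLog (m * (1 + θ * (exp ε - 1)))
        + n * negMulLog (m * exp ε) ≤ Hent q := by
  have hc : 0 < exp ε - 1 := sub_pos.2 (one_lt_exp_iff.2 hε)
  obtain ⟨i₀, -, hi₀⟩ := Finset.univ.exists_min_image q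
    (Finset.nonempty_of_sum_ne_zero (hq ▸ one_ne_zero))
  set m := q i₀
  have hm : 0 < m := by
    by_contra! hm
    have hle : ∑ j, q j ≤ ∑ _j : S, exp ε * m := Finset.sum_le_sum fun j _ => hratio j i₀
    rw [Finset.sum_const, nsmul_eq_mul, Finset.card_univ, hq] at hle
    have hEm : exp ε * m ≤ 0 := mul_nonpos_of_nonneg_of_nonpos (exp_pos ε).le hm
    linarith [mul_nonpos_of_nonneg_of_nonpos (Fintype.card S).cast_nonneg hEm]
  set t : S → ℝ := fun j => (q j - m) / (m * (exp ε - 1))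
  have hqt : ∀ j, q j = m * (1 + t j * (exp ε - 1)) := fun j => by
    simp only [t]
    field_simp
    ring
  have ht : ∀ j, t j ∈ Set.Icc 0 1 := fun j =>
    ⟨div_nonneg (sub_nonneg.2 (hi₀ j (Finset.mem_univ j))) (by positivity),
      (div_le_one (by positivity)).2 (by linarith [hratio j i₀])⟩
  set ψ : ℝ → ℝ := fun u => negMulLog (m * (1 + u * (exp ε - 1))) - negMulLog m
  have hψ : ConcaveOn ℝ (Set.Icc 0 1) ψ := by
    refine ⟨convex_Icc 0 1, fun u hu v hv a b ha hb hab => ?_⟩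
    have h := concaveOn_negMulLog.2 (x := m * (1 + u * (exp ε - 1)))
      (y := m * (1 + v * (exp ε - 1))) (Set.mem_Ici.2 (by have := hu.1; positivity))
      (Set.mem_Ici.2 (by have := hv.1; positivity)) ha hb hab
    have hcomb : a • (m * (1 + u * (exp ε - 1))) + b • (m * (1 + v * (exp ε - 1)))
        = m * (1 + (a • u + b • v) * (exp ε - 1)) := by
      simp only [smul_eq_mul]
      linear_combination m * hab
    rw [hcomb] at h
    simp only [ψ, smul_eq_mul] at h ⊢
    linear_combination h - negMulLog m * hab
  obtain ⟨n, θ, hθ, hsum, hle⟩ := hψ.exists_le_sum_map (by simp [ψ]) Finset.univ fun j _ => ht j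
  refine ⟨n, ?_, θ, hθ, m, ?_, ?_⟩
  · have hlt : ∑ j, t j < ∑ _j : S, (1 : ℝ) :=
      Finset.sum_lt_sum (fun j _ => (ht j).2) ⟨i₀, Finset.mem_univ _, by simp [t, m]⟩
    simp only [Finset.sum_const, nsmul_eq_mul, mul_one, Finset.card_univ] at hlt
    have : (n : ℝ) < Fintype.card S := by linarith [hθ.1]
    exact_mod_cast this
  · calc m * ((n + θ) * (exp ε - 1) + Fintype.card S)
        = ∑ j, m * (1 + t j * (exp ε - 1)) := by
          simp only [hsum, mul_add, mul_one, Finset.sum_add_distrib, Finset.sum_const,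
            nsmul_eq_mul, Finset.card_univ, ← Finset.mul_sum, ← Finset.sum_mul]
          ring
      _ = 1 := (Finset.sum_congr rfl fun j _ => hqt j).symm.trans hq
  · have hψ₁ : ψ 1 = negMulLog (m * exp ε) - negMulLog m := by simp [ψ]
    have hH : Hent q = ∑ j, ψ (t j) + Fintype.card S * negMulLog m := by
      simp only [Hent_eq_sum_negMulLog, ψ, ← hqt, Finset.sum_sub_distrib, Finset.sum_const,
        nsmul_eq_mul, Finset.card_univ]
      ring
    rw [hH]
    simp only [hψ₁, ψ] at hle
    linarith

/-- The right-hand side is the entropy of the distribution with `k - x - 1` entries `m`,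
one entry `m (1 + θ (e^ε - 1))` and `x` entries `m e^ε`. -/
theorem min_keyEntropy_le {k : ℕ} {ε x θ m : ℝ} (hε : 0 < ε) (hx : 0 ≤ x) (hxk : x + 1 ≤ k)
    (hθ : θ ∈ Set.Icc 0 1) (hm : m * ((x + θ) * (exp ε - 1) + k) = 1) :
    min (keyEntropy k ε x) (keyEntropy k ε (x + 1)) ≤
      (k - x - 1) * negMulLog m + negMulLog (m * (1 + θ * (exp ε - 1)))
        + x * negMulLog (m * exp ε) := by
  have hk : 0 < k := by exact_mod_cast (by linarith : (0 : ℝ) < k)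
  have hD₀ := keyDenom_pos (k := k) hk hε.le hx
  have hD₁ := keyDenom_pos (k := k) hk hε.le (by linarith : 0 ≤ x + 1)
  have hm₀ : 0 ≤ m := by
    have : 0 < (x + θ) * (exp ε - 1) + k := keyDenom_pos hk hε.le (by linarith [hθ.1])
    nlinarith
  set a₀ := (x * (exp ε - 1) + k)⁻¹
  set a₁ := ((x + 1) * (exp ε - 1) + k)⁻¹
  -- that distribution is `(1 - μ) q^x + μ q^(x+1)`
  set μ := m * θ * ((x + 1) * (exp ε - 1) + k)
  have hμ₀ : 0 ≤ μ := by have := hθ.1; positivity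
  have hμ₁ : μ ≤ 1 := by nlinarith [mul_nonneg hm₀ (mul_nonneg (sub_nonneg.2 hθ.2) hD₀.le)]
  have hμa₁ : μ * a₁ = m * θ := by
    simp only [μ, a₁]
    field_simp
  have hμa₀ : (1 - μ) * a₀ = m * (1 - θ) := by
    rw [mul_inv_eq_iff_eq_mul₀ hD₀.ne']
    linear_combination -hm
  have e₁ : (1 - μ) * a₀ + μ * a₁ = m := by linear_combination hμa₀ + hμa₁
  have e₂ : (1 - μ) * a₀ + μ * (exp ε * a₁) = m * (1 + θ * (exp ε - 1)) := by
    linear_combination hμa₀ + exp ε * hμa₁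
  have e₃ : (1 - μ) * (exp ε * a₀) + μ * (exp ε * a₁) = m * exp ε := by
    rw [← e₁]; ring
  have hconc : ∀ u v : ℝ, 0 ≤ u → 0 ≤ v →
      (1 - μ) * negMulLog u + μ * negMulLog v ≤ negMulLog ((1 - μ) * u + μ * v) :=
    fun u v hu hv => concaveOn_negMulLog.2 hu hv (sub_nonneg.2 hμ₁) hμ₀ (sub_add_cancel 1 μ)
  rw [keyEntropy_eq_negMulLog, keyEntropy_eq_negMulLog]
  calc _ ≤ (1 - μ) * ((k - x) * negMulLog a₀ + x * negMulLog (exp ε * a₀))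
        + μ * ((k - (x + 1)) * negMulLog a₁ + (x + 1) * negMulLog (exp ε * a₁)) :=
        Convex.min_le_combo _ _ (sub_nonneg.2 hμ₁) hμ₀ (sub_add_cancel 1 μ)
    _ = (k - x - 1) * ((1 - μ) * negMulLog a₀ + μ * negMulLog a₁)
        + ((1 - μ) * negMulLog a₀ + μ * negMulLog (exp ε * a₁))
        + x * ((1 - μ) * negMulLog (exp ε * a₀) + μ * negMulLog (exp ε * a₁)) := by ring
    _ ≤ _ := by
      rw [← e₂, ← e₃, ← e₁]
      gcongr
      · linarith
      all_goals apply hconc <;> positivity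

/-- **Core of the second necessary condition of Theorem 4 of the paper:** every
distribution on `[k]` with pairwise probability ratios at most `e^ε` has entropy at least
`min_{s ∈ {⌈l⌉,⌊l⌋}} H(q^s)` where `l = k(e^ε(ε−1)+1)/(e^ε−1)²`. -/
theorem stmt10 (k : ℕ) (hk : 2 ≤ k) (ε : ℝ) (hε : 0 < ε)
    (l : ℝ) (hl : l = (k : ℝ) * (Real.exp ε * (ε - 1) + 1) / (Real.exp ε - 1) ^ 2)
    (q : Fin k → ℝ) (hq : IsDist q)
    (hratio : ∀ i j : Fin k, q i ≤ Real.exp ε * q j) :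
    min (Hent (keyDist k ⌈l⌉₊ ε)) (Hent (keyDist k ⌊l⌋₊ ε)) ≤ Hent q := by
  obtain rfl : l = keyArgmin k ε := hl
  obtain ⟨n, hn, θ, hθ, m, hm, hHq⟩ := exists_le_Hent_of_ratio_le hε hq.2 hratio
  rw [Fintype.card_fin] at hn hm hHq
  have hceil : ⌈keyArgmin k ε⌉₊ ≤ k := Nat.ceil_le.2 (keyArgmin_le k ε)
  rw [Hent_keyDist hceil, Hent_keyDist ((Nat.floor_le_ceil _).trans hceil)]
  calc _ ≤ min (keyEntropy k ε n) (keyEntropy k ε (n + 1)) :=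
        min_ceil_floor_le_of_antitoneOn_of_monotoneOn (keyEntropy_antitoneOn (by omega) hε)
          (keyEntropy_monotoneOn (by omega) hε) n
    _ ≤ _ := min_keyEntropy_le hε n.cast_nonneg (by exact_mod_cast hn) hθ hm
    _ ≤ Hent q := hHq
end

section
/- Let k ≥ 1, ε ≥ 0, and let q be a probability distribution on ℤ/kℤ with q(u) > 0 for all u and max_u q(u) ≤ e^ε · min_u q(u). Define f : ℤ/kℤ × ℤ/kℤ → ℤ/kℤ by f(x,u) = x + u (addition in ℤ/kℤ). Then: (i) for every u, the map x ↦ f(x,u) is injective, so the input is recoverable from the output and the key; (ii) the induced kernel Q(y|x) = q(y − x) is a stochastic matrix satisfying Q(y|x) ≤ e^ε Q(y|x′) for all x, x′, y. Hence there exists an ε-LDP-Rec mechanism with input, key, and output alphabets all of size k, designed using the key distribution q. -/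
open Finset

theorem IsDist.comp_equiv {S T : Type*} [Fintype S] [Fintype T] {q : S → ℝ}
    (hq : IsDist q) (e : T ≃ S) : IsDist (q ∘ e) :=
  ⟨fun t => hq.1 (e t), (e.sum_comp q).trans hq.2⟩

theorem stmt11_general (k : ℕ) [NeZero k] (ε : ℝ)
    (q : ZMod k → ℝ) (hq : IsDist q)
    (hratio : ∀ u u' : ZMod k, q u ≤ Real.exp ε * q u') :
    (∀ u : ZMod k, Function.Injective (fun x : ZMod k => x + u)) ∧
    (∀ x : ZMod k, (∀ y : ZMod k, 0 ≤ q (y - x)) ∧ ∑ y : ZMod k, q (y - x) = 1) ∧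
    (∀ x : ZMod k, ∀ u y : ZMod k, x + u = y ↔ u = y - x) ∧
    (∀ x x' y : ZMod k, q (y - x) ≤ Real.exp ε * q (y - x')) :=
  ⟨add_left_injective, fun x => hq.comp_equiv (Equiv.subRight x),
    fun _ _ _ => eq_sub_iff_add_eq'.symm, fun _ _ _ => hratio _ _⟩

/-- **Lemma 5.1 of the paper (sufficiency direction of Theorem 4):** given a full-support
key distribution `q` on `ℤ/kℤ` with `max q ≤ e^ε min q`, the map `f(x,u) = x + u` yields an
`ε`-LDP-Rec mechanism with input, key and output alphabets of size `k`: (i) `f(·,u)` is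
injective for each `u` (recoverability), and (ii) the induced kernel `Q(y|x) = q(y − x)`
is a stochastic matrix satisfying the `ε`-LDP ratio bound. -/
theorem stmt11 (k : ℕ) [NeZero k] (hk : 1 ≤ k) (ε : ℝ) (hε : 0 ≤ ε)
    (q : ZMod k → ℝ) (hq : IsDist q) (hqpos : ∀ u, 0 < q u)
    (hratio : ∀ u u' : ZMod k, q u ≤ Real.exp ε * q u') :
    (∀ u : ZMod k, Function.Injective (fun x : ZMod k => x + u)) ∧
    (∀ x : ZMod k, (∀ y : ZMod k, 0 ≤ q (y - x)) ∧ ∑ y : ZMod k, q (y - x) = 1) ∧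
    (∀ x : ZMod k, ∀ u y : ZMod k, x + u = y ↔ u = y - x) ∧
    (∀ x x' y : ZMod k, q (y - x) ≤ Real.exp ε * q (y - x')) :=
  stmt11_general k ε q hq hratio
end

section
/- Let m ≥ 2 and let q = (q₁,…,q_m) be a probability distribution with q₁ ≥ q₂ ≥ ⋯ ≥ q_m > 0. Define the probability distribution q′ = (q′₁,…,q′_{m−1}) by q′_j = q_j/(1 − q_m) for j ∈ [m−1]. Then H(q) ≥ H(q′), i.e., removing the least likely symbol and renormalizing does not increase the Shannon entropy. -/
/-! Let `r` be `q` without its last (smallest) mass `p`, so `∑ r = 1 - p` and `q' = r / (1 - p)`.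
Then `H(q') = H(r)/(1 - p) + log (1 - p)` and `H(q) = H(r) - p log p`. Every mass of `r` is at
least `p`, so `H(r) ≤ -(1 - p) log p`; together with `log (1 - p) ≤ 0` this gives the claim. -/

open Finset

theorem Hent_div_const {S : Type*} [Fintype S] (r : S → ℝ) {c : ℝ} (hc : c ≠ 0)
    (hr : ∑ s, r s = c) :
    Hent (fun s => r s / c) = Hent r / c + Real.log c := by
  have hterm : ∀ s, r s / c * Real.log (r s / c) =
      r s * Real.log (r s) / c - r s / c * Real.log c := by
    intro s
    by_cases hs : r s = 0
    · simp [hs]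
    · rw [Real.log_div hs hc]
      ring
  simp only [Hent, hterm, sum_sub_distrib, ← sum_div, ← sum_mul, hr, div_self hc]
  ring

theorem Hent_univ_castSucc {n : ℕ} (q : Fin (n + 1) → ℝ) :
    Hent q = Hent (fun j : Fin n => q j.castSucc) - q (Fin.last n) * Real.log (q (Fin.last n)) := by
  simp only [Hent, Fin.sum_univ_castSucc]
  ring

theorem Hent_le_neg_sum_mul_log_of_le {S : Type*} [Fintype S] (r : S → ℝ) {a : ℝ} (ha : 0 < a)
    (hle : ∀ s, a ≤ r s) :
    Hent r ≤ -(∑ s, r s) * Real.log a := by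
  rw [Hent, neg_mul, neg_le_neg_iff, sum_mul]
  exact sum_le_sum fun s _ =>
    mul_le_mul_of_nonneg_left (Real.log_le_log ha (hle s)) (ha.le.trans (hle s))

/-- **Lemma F.1 of the paper:** removing the least likely symbol of a distribution and
renormalizing does not increase the Shannon entropy.  The alphabet size is `m = n + 2 ≥ 2`,
probabilities are nonincreasing (`q (Fin.last _)` is the smallest) and positive, and
`q' j = q j / (1 − q_m)` on the first `m − 1` symbols. -/
theorem stmt13 (n : ℕ) (q : Fin (n + 2) → ℝ)
    (hsum : ∑ j, q j = 1)
    (hpos : ∀ j, 0 < q j)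
    (hmono : ∀ i j : Fin (n + 2), i ≤ j → q j ≤ q i)
    (q' : Fin (n + 1) → ℝ)
    (hq' : ∀ j : Fin (n + 1), q' j = q j.castSucc / (1 - q (Fin.last (n + 1)))) :
    Hent q' ≤ Hent q := by
  set p := q (Fin.last (n + 1))
  set r : Fin (n + 1) → ℝ := fun j => q j.castSucc
  have hr : ∑ j, r j = 1 - p := by
    rw [Fin.sum_univ_castSucc] at hsum
    linarith
  have hS : 0 < 1 - p := hr ▸ sum_pos (fun j _ => hpos _) univ_nonempty
  have hp : 0 < p := hpos _
  have hq'_eq : Hent q' = Hent r / (1 - p) + Real.log (1 - p) := by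
    rw [← Hent_div_const r hS.ne' hr]
    exact congrArg Hent (funext hq')
  have hr_le : Hent r ≤ -(1 - p) * Real.log p :=
    hr ▸ Hent_le_neg_sum_mul_log_of_le r hp fun j => hmono _ _ (Fin.le_last _)
  have hlog : Real.log (1 - p) ≤ 0 := Real.log_nonpos hS.le (by linarith)
  rw [hq'_eq, Hent_univ_castSucc q, div_add' _ _ _ hS.ne', div_le_iff₀ hS]
  nlinarith [mul_le_mul_of_nonneg_left hr_le hp.le, mul_nonpos_of_nonneg_of_nonpos hS.le hlog]
end

section
/- Let k ≥ 1, T ≥ 1, and ε ≥ 0. Let P be a probability distribution on (ℤ/kℤ)^T with P(v) > 0 for all v and P(v) ≤ e^ε P(v′) for all neighboring v, v′ (differing in exactly one coordinate). Define f : (ℤ/kℤ)^T × (ℤ/kℤ)^T → (ℤ/kℤ)^T by f(x,u) = x ⊕ u, the componentwise sum in ℤ/kℤ, and let the key be distributed according to P. Then: (i) for each fixed u, the map x ↦ f(x,u) is injective, so the input database is recoverable from the output and the key; (ii) the induced kernel Q(y|x) = P(y ⊖ x) is a stochastic matrix satisfying Q(y|x) ≤ e^ε Q(y|x′) for all neighboring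 databases x, x′ and every output y. Hence f is an ε-DP-Rec mechanism. -/
def Neighbor {T : ℕ} {α : Type*} (x x' : Fin T → α) : Prop :=
  ∃ t, x t ≠ x' t ∧ ∀ s, s ≠ t → x s = x' s

theorem IsDist.comp_sub_right {G : Type*} [AddGroup G] [Fintype G] {q : G → ℝ}
    (hq : IsDist q) (x : G) : IsDist fun y => q (y - x) :=
  ⟨fun _ => hq.1 _, (Equiv.subRight x).sum_comp q ▸ hq.2⟩

theorem Neighbor.sub_left {T : ℕ} {α : Type*} [AddGroup α] {x x' : Fin T → α}
    (h : Neighbor x x') (y : Fin T → α) : Neighbor (y - x) (y - x') := by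
  obtain ⟨t, hne, heq⟩ := h
  exact ⟨t, fun h => hne (sub_right_injective h), fun s hs => by simp [heq s hs]⟩

theorem stmt15_general (k T : ℕ) [NeZero k] (ε : ℝ)
    (P : (Fin T → ZMod k) → ℝ) (hP : IsDist P)
    (hDP : ∀ v v', Neighbor v v' → P v ≤ Real.exp ε * P v') :
    (∀ u : Fin T → ZMod k, Function.Injective (fun x : Fin T → ZMod k => x + u)) ∧
    (∀ x : Fin T → ZMod k, (∀ y, 0 ≤ P (y - x)) ∧ ∑ y : Fin T → ZMod k, P (y - x) = 1) ∧
    (∀ x u y : Fin T → ZMod k, x + u = y ↔ u = y - x) ∧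
    (∀ x x' : Fin T → ZMod k, Neighbor x x' →
      ∀ y : Fin T → ZMod k, P (y - x) ≤ Real.exp ε * P (y - x')) :=
  ⟨add_left_injective, hP.comp_sub_right, fun _ _ _ => eq_sub_iff_add_eq'.symm,
    fun _ _ hn y => hDP _ _ (hn.sub_left y)⟩

/-- **Lemma 6.1 of the paper:** if `P` is a full-support `ε`-DP distribution on
`(ℤ/kℤ)^T` (ratio bound for neighboring databases), then `f(x,u) = x ⊕ u`
(componentwise sum) with key distributed as `P` is an `ε`-DP-Rec mechanism:
(i) `f(·,u)` is injective for each `u`, and (ii) the induced kernel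
`Q(y|x) = P(y ⊖ x)` is a stochastic matrix satisfying the `ε`-DP ratio bound for
neighboring databases. -/
theorem stmt15 (k T : ℕ) [NeZero k] (hk : 1 ≤ k) (hT : 1 ≤ T) (ε : ℝ) (hε : 0 ≤ ε)
    (P : (Fin T → ZMod k) → ℝ) (hP : IsDist P) (hPpos : ∀ v, 0 < P v)
    (hDP : ∀ v v', Neighbor v v' → P v ≤ Real.exp ε * P v') :
    (∀ u : Fin T → ZMod k, Function.Injective (fun x : Fin T → ZMod k => x + u)) ∧
    (∀ x : Fin T → ZMod k, (∀ y, 0 ≤ P (y - x)) ∧ ∑ y : Fin T → ZMod k, P (y - x) = 1) ∧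
    (∀ x u y : Fin T → ZMod k, x + u = y ↔ u = y - x) ∧
    (∀ x x' : Fin T → ZMod k, Neighbor x x' →
      ∀ y : Fin T → ZMod k, P (y - x) ≤ Real.exp ε * P (y - x')) :=
  stmt15_general k T ε P hP hDP
end

section
/- Fix ε > 0 and a real k > 0, and define g : [0,k] → ℝ by g(s) = log(s(e^ε−1)+k) − s ε e^ε/(s(e^ε−1)+k). Then: (i) g(0) = g(k) = log k; (ii) s̃ = k(e^ε(ε−1)+1)/(e^ε−1)² lies strictly between 0 and k; (iii) s̃ is the unique critical point of g in (0,k), i.e., the unique s ∈ (0,k) with g′(s) = 0; and (iv) g attains its minimum over [0,k] at s̃. -/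
/-!
With `a = e^ε − 1` and `c = εe^ε`, the function `g(s) = log(sa + k) − sc/(sa + k)` has derivative
`a²(s − s̃)/(sa + k)²`, where `s̃ = k(c − a)/a²`. So `g` decreases up to `s̃` and increases after
it. The bounds `0 < s̃ < k` amount to `1 − ε < e^{−ε}` and `ε + 1 < e^ε`.
-/

open Real Set

theorem exp_mul_sub_one_add_one_pos {x : ℝ} (hx : x ≠ 0) : 0 < exp x * (x - 1) + 1 := by
  have h := add_one_lt_exp (neg_ne_zero.mpr hx)
  have : exp x * exp (-x) = 1 := by rw [← exp_add]; simp
  nlinarith [exp_pos x]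

theorem exp_mul_sub_one_add_one_lt_sq {x : ℝ} (hx : x ≠ 0) :
    exp x * (x - 1) + 1 < (exp x - 1) ^ 2 := by
  nlinarith [add_one_lt_exp hx, exp_pos x]

theorem isMinOn_Icc_of_hasDerivAt_mul_sub {f p : ℝ → ℝ} {l m r : ℝ} (hm : m ∈ Icc l r)
    (hf : ∀ x ∈ Icc l r, HasDerivAt f (p x * (x - m)) x) (hp : ∀ x ∈ Icc l r, 0 ≤ p x) :
    IsMinOn f (Icc l r) m := by
  have hcont : ∀ x ∈ Icc l r, ContinuousAt f x := fun x hx => (hf x hx).continuousAt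
  have hIoo : ∀ {x b c}, x ∈ Ioo b c → l ≤ b → c ≤ r → x ∈ Icc l r :=
    fun hx hb hc => ⟨hb.trans hx.1.le, hx.2.le.trans hc⟩
  have hdiff : ∀ b c, l ≤ b → c ≤ r → DifferentiableOn ℝ f (Ioo b c) := fun b c hb hc x hx =>
    (hf x (hIoo hx hb hc)).differentiableAt.differentiableWithinAt
  refine isMinOn_Icc_of_deriv (hcont l (left_mem_Icc.2 (hm.1.trans hm.2))) (hcont m hm)
    (hcont r (right_mem_Icc.2 (hm.1.trans hm.2))) (hdiff l m le_rfl hm.2)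
    (hdiff m r hm.1 le_rfl) (fun x hx => ?_) (fun x hx => ?_)
  · rw [(hf x (hIoo hx le_rfl hm.2)).deriv]
    exact mul_nonpos_of_nonneg_of_nonpos (hp x (hIoo hx le_rfl hm.2)) (by linarith [hx.2])
  · rw [(hf x (hIoo hx hm.1 le_rfl)).deriv]
    exact mul_nonneg (hp x (hIoo hx hm.1 le_rfl)) (by linarith [hx.1])

theorem hasDerivAt_log_sub_div {a c k s : ℝ} (ha : a ≠ 0) (hs : s * a + k ≠ 0) :
    HasDerivAt (fun x => log (x * a + k) - x * c / (x * a + k))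
      ((a / (s * a + k)) ^ 2 * (s - k * (c - a) / a ^ 2)) s := by
  have hlin : HasDerivAt (fun x => x * a + k) a s := by
    simpa using ((hasDerivAt_id s).mul_const a).add_const k
  have hmul : HasDerivAt (fun x => x * c) c s := by simpa using (hasDerivAt_id s).mul_const c
  refine ((hlin.log hs).sub (hmul.div hlin hs)).congr_deriv ?_
  field_simp
  ring

/-- **Equations (5.4)–(5.5) of the paper (calculus fact):** for
`g(s) = log(s(e^ε−1)+k) − sεe^ε/(s(e^ε−1)+k)` on `[0,k]`,
(i) `g(0) = g(k) = log k`; (ii) `s̃ = k(e^ε(ε−1)+1)/(e^ε−1)²` lies strictly in `(0,k)`;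
(iii) `s̃` is the unique critical point of `g` in `(0,k)`; and
(iv) `g` attains its minimum over `[0,k]` at `s̃`. -/
theorem stmt17 (ε k : ℝ) (hε : 0 < ε) (hk : 0 < k)
    (g : ℝ → ℝ)
    (hg : ∀ s, g s = Real.log (s * (Real.exp ε - 1) + k) -
      s * ε * Real.exp ε / (s * (Real.exp ε - 1) + k))
    (st : ℝ) (hst : st = k * (Real.exp ε * (ε - 1) + 1) / (Real.exp ε - 1) ^ 2) :
    g 0 = Real.log k ∧ g k = Real.log k ∧
    0 < st ∧ st < k ∧
    deriv g st = 0 ∧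
    (∀ s ∈ Set.Ioo (0 : ℝ) k, deriv g s = 0 → s = st) ∧
    (∀ s ∈ Set.Icc (0 : ℝ) k, g st ≤ g s) := by
  set a := exp ε - 1 with ha_def
  have ha : 0 < a := sub_pos.mpr (one_lt_exp_iff.mpr hε)
  have hden : ∀ s, 0 ≤ s → 0 < s * a + k := fun s hs => by positivity
  have hderiv : ∀ s, 0 ≤ s → HasDerivAt g ((a / (s * a + k)) ^ 2 * (s - st)) s := by
    intro s hs
    have hst' : st = k * (ε * exp ε - a) / a ^ 2 := by rw [hst, ha_def]; ring
    have hg' : g = fun x => log (x * a + k) - x * (ε * exp ε) / (x * a + k) := by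
      funext x; rw [hg, mul_assoc]
    rw [hg', hst']
    exact hasDerivAt_log_sub_div ha.ne' (hden s hs).ne'
  have hst0 : 0 < st := by
    rw [hst]; exact div_pos (mul_pos hk (exp_mul_sub_one_add_one_pos hε.ne')) (by positivity)
  have hstk : st < k := by
    rw [hst, div_lt_iff₀ (by positivity)]
    exact mul_lt_mul_of_pos_left (exp_mul_sub_one_add_one_lt_sq hε.ne') hk
  refine ⟨by simp [hg], ?_, hst0, hstk, by simp [(hderiv st hst0.le).deriv], ?_,
    isMinOn_Icc_of_hasDerivAt_mul_sub ⟨hst0.le, hstk.le⟩ (fun s hs => hderiv s hs.1)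
      (fun s _ => sq_nonneg _)⟩
  · rw [hg, show k * a + k = k * exp ε by rw [ha_def]; ring, log_mul hk.ne' (exp_pos ε).ne']
    field_simp
    simp
  · intro s hs h0
    rw [(hderiv s hs.1.le).deriv] at h0
    simpa [sub_eq_zero, ha.ne', (hden s hs.1.le).ne'] using h0
end

section
/- Fix ε > 0 and an integer k ≥ 2. Define B = 2^{⌈log₂(min{e^ε, 2k})⌉ − 1}, b = 2^{⌈log₂(k/B + 1)⌉}, K = B·b, and s = b/2. Then the entropy of the key used by the Hadamard Response mechanism, H^{HR} = log(s e^ε + K − s) − ε e^ε s/(s e^ε + K − s), satisfies: H^{HR} ≤ log(2k(3e^ε−1)/e^ε) − ε e^ε/(3e^ε−1) if ε ≤ log(k) + 1, and H^{HR} ≤ log(e^ε + 4k − 1) − ε e^ε/(e^ε + 4k − 1) if ε > log(k) + 1. -/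
/-!
Write `E = e^ε` and `H(s, B) = log(s(E - 1 + 2B)) - εE/(E - 1 + 2B)`; since `K = 2sB`, the key
entropy is `H(s, B)`, and the two bounds are `H(2k/E, E)` and `H(1, 2k)`. The ceilings make `B` and
`s` powers of two with `B < min(E, 2k) ≤ 2B` and `s < k/B + 1`, and `H` increases in both arguments.
If `E > ek`, then `B ≥ k` forces `s = 1` and `B < 2k`, which gives the second bound. If `E ≤ ek` and
`sE ≤ 2k`, monotonicity gives the first. Otherwise one trades `s ≤ 2k/B` against `B ≤ E`: by
`log x ≤ x - 1`, `H(c/B, B) ≤ H(c/E, E)` whenever `(E - 1)(E - 1 + 2B) ≤ 2εEB`, and this holds for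
`B ≥ 2`, `E ≤ 2B` by concavity of `log` on `[2, 8]`. The one remaining case, `B = 1 < E ≤ 2`, is a
direct polynomial estimate.
-/

open Real

lemma two_zpow_eq_one_or_two_le {n : ℤ} (hn : 0 ≤ n) : (2 : ℝ) ^ n = 1 ∨ 2 ≤ (2 : ℝ) ^ n := by
  obtain rfl | hn := hn.eq_or_lt
  · simp
  · right
    simpa using zpow_le_zpow_right₀ one_le_two (show (1 : ℤ) ≤ n by omega)

section DyadicCeiling

variable {x : ℝ}

lemma ceil_logb_two_eq_clog (hx : 0 < x) : ⌈logb 2 x⌉ = Int.clog 2 x := by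
  exact_mod_cast ceil_logb_natCast (b := 2) hx.le

lemma two_zpow_ceil_logb_sub_one_lt (hx : 0 < x) : (2 : ℝ) ^ (⌈logb 2 x⌉ - 1) < x := by
  rw [ceil_logb_two_eq_clog hx]
  exact_mod_cast Int.zpow_pred_clog_lt_self one_lt_two hx

lemma le_two_mul_two_zpow_ceil_logb_sub_one (hx : 0 < x) :
    x ≤ 2 * (2 : ℝ) ^ (⌈logb 2 x⌉ - 1) := by
  rw [mul_comm, ← zpow_add_one₀ two_ne_zero, sub_add_cancel, ceil_logb_two_eq_clog hx]
  exact_mod_cast Int.self_le_zpow_clog one_lt_two x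

lemma two_zpow_ceil_logb_sub_one_eq_one_or_two_le (hx : 1 < x) :
    (2 : ℝ) ^ (⌈logb 2 x⌉ - 1) = 1 ∨ 2 ≤ (2 : ℝ) ^ (⌈logb 2 x⌉ - 1) :=
  two_zpow_eq_one_or_two_le (by have := Int.ceil_pos.mpr (logb_pos one_lt_two hx); omega)

end DyadicCeiling

lemma sub_one_mul_log_two_le_log {y : ℝ} (h1 : 1 ≤ y) (h2 : y ≤ 2) : (y - 1) * log 2 ≤ log y := by
  have h := strictConcaveOn_log_Ioi.concaveOn.2 (Set.mem_Ioi.mpr one_pos)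
    (Set.mem_Ioi.mpr two_pos) (sub_nonneg.mpr h2) (sub_nonneg.mpr h1) (by ring)
  simp only [smul_eq_mul, log_one, mul_zero, zero_add] at h
  rwa [show (2 - y) * 1 + (y - 1) * 2 = y by ring] at h

lemma sub_one_mul_sub_one_add_two_mul_le {E B : ℝ} (hB : 2 ≤ B) (hEB : E ≤ 2 * B) (hE : 2 < E) :
    (E - 1) * (E - 1 + 2 * B) ≤ 2 * log E * E * B := by
  have hlog2 := log_two_gt_d9
  have hslope : E - 1 ≤ E * log E := by
    have h := mul_le_mul_of_nonneg_left (one_sub_inv_le_log_of_pos (by linarith : 0 < E))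
      (by linarith : (0 : ℝ) ≤ E)
    rwa [mul_sub, mul_one, mul_inv_cancel₀ (by linarith)] at h
  suffices key : (E - 1) ^ 2 ≤ 2 * B * (E * log E - E + 1) by nlinarith
  rcases le_or_gt E 4 with hE4 | hE4
  · have hchord : E / 2 * log 2 ≤ log E := by
      have := sub_one_mul_log_two_le_log (y := E / 2) (by linarith) (by linarith)
      rw [log_div (by linarith) two_ne_zero] at this
      linarith
    have : (E - 1) ^ 2 ≤ 2 * 2 * (E * log E - E + 1) := by
      nlinarith [mul_le_mul_of_nonneg_left hchord (by linarith : (0 : ℝ) ≤ E)]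
    nlinarith
  rcases le_or_gt E 8 with hE8 | hE8
  · have hchord : (E + 4) / 4 * log 2 ≤ log E := by
      have := sub_one_mul_log_two_le_log (y := E / 4) (by linarith) (by linarith)
      rw [log_div (by linarith) four_ne_zero, show (4 : ℝ) = 2 ^ 2 by norm_num, log_pow] at this
      push_cast at this
      linarith
    have : (E - 1) ^ 2 ≤ 2 * (E / 2) * (E * log E - E + 1) := by
      have hcubic := mul_le_mul_of_nonneg_right hlog2.le (by positivity : (0 : ℝ) ≤ E ^ 2 * (E + 4))
      nlinarith [mul_le_mul_of_nonneg_left hchord (by positivity : (0 : ℝ) ≤ E ^ 2),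
        pow_nonneg (sub_nonneg.mpr hE4.le) 3]
    nlinarith
  · have hlogE : 2 ≤ log E := by
      have := log_le_log (by norm_num) hE8.le
      rw [show (8 : ℝ) = 2 ^ 3 by norm_num, log_pow] at this
      push_cast at this
      linarith
    nlinarith

-- `H^{HR}` in terms of `s` and `B`, using `K = 2sB`.
noncomputable def hrKeyEntropy (ε s B : ℝ) : ℝ :=
  log (s * (exp ε - 1 + 2 * B)) - ε * exp ε / (exp ε - 1 + 2 * B)

section KeyEntropy

variable {ε s B : ℝ}

lemma hrKeyEntropy_le_of_mul_le {s' B' : ℝ} (hε : 0 ≤ ε) (hs : 0 < s) (hB : 0 < B)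
    (hBB' : B ≤ B') (hmul : s * (exp ε - 1 + 2 * B) ≤ s' * (exp ε - 1 + 2 * B')) :
    hrKeyEntropy ε s B ≤ hrKeyEntropy ε s' B' := by
  have hU : 0 < exp ε - 1 + 2 * B := by linarith [one_le_exp hε]
  have hlog := log_le_log (mul_pos hs hU) hmul
  have hfrac : ε * exp ε / (exp ε - 1 + 2 * B') ≤ ε * exp ε / (exp ε - 1 + 2 * B) :=
    div_le_div_of_nonneg_left (by positivity) hU (by linarith)
  unfold hrKeyEntropy
  linarith

lemma hrKeyEntropy_div_le_div_exp {c : ℝ} (hε : 0 ≤ ε) (hc : 0 < c) (hB : 0 < B)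
    (hBE : B ≤ exp ε) (h : (exp ε - 1) * (exp ε - 1 + 2 * B) ≤ 2 * ε * exp ε * B) :
    hrKeyEntropy ε (c / B) B ≤ hrKeyEntropy ε (c / exp ε) (exp ε) := by
  set E := exp ε
  have hE : 1 ≤ E := one_le_exp hε
  have hU : 0 < E - 1 + 2 * B := by linarith
  have hU' : 0 < E - 1 + 2 * E := by linarith
  have hlog : log (c / B * (E - 1 + 2 * B)) - log (c / E * (E - 1 + 2 * E))
      ≤ (E - 1) * (E - B) / (B * (E - 1 + 2 * E)) := by
    rw [← log_div (by positivity) (by positivity)]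
    calc _ ≤ c / B * (E - 1 + 2 * B) / (c / E * (E - 1 + 2 * E)) - 1 :=
          log_le_sub_one_of_pos (by positivity)
      _ = _ := by rw [div_sub_one (by positivity)]; field_simp; ring
  have hfrac : (E - 1) * (E - B) / (B * (E - 1 + 2 * E))
      ≤ ε * E / (E - 1 + 2 * B) - ε * E / (E - 1 + 2 * E) := by
    rw [div_sub_div _ _ hU.ne' hU'.ne', div_le_div_iff₀ (by positivity) (by positivity)]
    have := mul_le_mul_of_nonneg_right h (by positivity : 0 ≤ (E - B) * (E - 1 + 2 * E))
    nlinarith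
  unfold hrKeyEntropy
  linarith

end KeyEntropy

section Regimes

variable {ε s B k : ℝ}

lemma hrKeyEntropy_le_of_two_mul_lt_exp (hε : 0 ≤ ε) (hkE : 2 * k < exp ε)
    (hBm : B < min (exp ε) (2 * k)) (hmB : min (exp ε) (2 * k) ≤ 2 * B) (hB : 0 < B)
    (hsB : s < k / B + 1) (hs : s = 1 ∨ 2 ≤ s) :
    hrKeyEntropy ε s B ≤ hrKeyEntropy ε 1 (2 * k) := by
  rw [min_eq_right hkE.le] at hBm hmB
  obtain rfl : s = 1 := hs.resolve_right fun hs2 ↦ by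
    have : k / B ≤ 1 := (div_le_one hB).mpr (by linarith)
    linarith
  exact hrKeyEntropy_le_of_mul_le hε one_pos hB hBm.le (by linarith)

lemma hrKeyEntropy_le_of_two_le (hε : 0 < ε) (hk : 2 ≤ k) (hBE : B < exp ε)
    (hEB : exp ε ≤ 2 * B) (hB : B = 1 ∨ 2 ≤ B) (hsB : s < k / B + 1) (hs : 2 ≤ s) :
    hrKeyEntropy ε s B ≤ hrKeyEntropy ε (2 * k / exp ε) (exp ε) := by
  rcases hB with rfl | hB2
  · refine hrKeyEntropy_le_of_mul_le hε.le (by linarith) one_pos hBE.le ?_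
    have hE : 1 < exp ε := one_lt_exp_iff.mpr hε
    rw [div_one] at hsB
    rw [div_mul_eq_mul_div, le_div_iff₀ (exp_pos ε)]
    nlinarith [mul_le_mul_of_nonneg_right hsB.le (by positivity : 0 ≤ exp ε * (exp ε + 1)),
      mul_nonneg (sub_nonneg.mpr hk) (mul_nonneg (sub_nonneg.mpr hE.le) (sub_nonneg.mpr hEB))]
  have hsB' : (s - 1) * B < k := (lt_div_iff₀ (by linarith)).mp (by linarith)
  calc hrKeyEntropy ε s B ≤ hrKeyEntropy ε (2 * k / B) B := by
        refine hrKeyEntropy_le_of_mul_le hε.le (by linarith) (by linarith) le_rfl ?_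
        refine mul_le_mul_of_nonneg_right ((le_div_iff₀ (by linarith)).mpr ?_)
          (by linarith [one_le_exp hε.le])
        nlinarith
    _ ≤ hrKeyEntropy ε (2 * k / exp ε) (exp ε) := by
        refine hrKeyEntropy_div_le_div_exp hε.le (by linarith) (by linarith) hBE.le ?_
        simpa using sub_one_mul_sub_one_add_two_mul_le hB2 hEB (by linarith)

lemma hrKeyEntropy_le_of_exp_le (hε : 0 < ε) (hk : 2 ≤ k) (hEk : exp ε ≤ k * exp 1)
    (hBm : B < min (exp ε) (2 * k)) (hmB : min (exp ε) (2 * k) ≤ 2 * B) (hB : B = 1 ∨ 2 ≤ B)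
    (hsB : s < k / B + 1) (hs : s = 1 ∨ 2 ≤ s) :
    hrKeyEntropy ε s B ≤ hrKeyEntropy ε (2 * k / exp ε) (exp ε) := by
  have hB1 : 1 ≤ B := by rcases hB with h | h <;> linarith
  have hs1 : 1 ≤ s := by rcases hs with h | h <;> linarith
  have hBE : B < exp ε := hBm.trans_le (min_le_left _ _)
  rcases le_or_gt (s * exp ε) (2 * k) with hsE | hsE
  · refine hrKeyEntropy_le_of_mul_le hε.le (by linarith) (by linarith) hBE.le ?_
    rw [div_mul_eq_mul_div, le_div_iff₀ (exp_pos ε)]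
    nlinarith
  rcases hs with rfl | hs2
  · have hkE : 2 * k < exp ε := by linarith
    calc hrKeyEntropy ε 1 B ≤ hrKeyEntropy ε (2 * k / (2 * k)) (2 * k) := by
          rw [div_self (by linarith)]
          exact hrKeyEntropy_le_of_two_mul_lt_exp hε.le hkE hBm hmB (by linarith) hsB (.inl rfl)
      _ ≤ hrKeyEntropy ε (2 * k / exp ε) (exp ε) := by
          refine hrKeyEntropy_div_le_div_exp hε.le (by linarith) (by linarith) hkE.le ?_
          have hE4k : exp ε ≤ 2 * (2 * k) := by nlinarith [exp_one_lt_d9]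
          simpa using sub_one_mul_sub_one_add_two_mul_le (by linarith) hE4k (by linarith)
  · have hBk : B < k := by
      have : 1 < k / B := by linarith
      rwa [one_lt_div (by linarith)] at this
    have hEk : exp ε ≤ 2 * k := by
      by_contra! h
      rw [min_eq_right h.le] at hmB
      linarith
    rw [min_eq_left hEk] at hmB
    exact hrKeyEntropy_le_of_two_le hε hk hBE hmB hB hsB hs2

end Regimes

/-- **Equation (5.6) of the paper:** upper bound on the key entropy of the Hadamard
Response mechanism.  Here `B = 2^{⌈log₂(min{e^ε,2k})⌉−1}`, `b = 2^{⌈log₂(k/B+1)⌉}`,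
`K = B·b`, `s = b/2`, and `H^{HR} = log(s e^ε + K − s) − ε e^ε s/(s e^ε + K − s)`. -/
theorem stmt18 (ε : ℝ) (hε : 0 < ε) (k : ℕ) (hk : 2 ≤ k)
    (B b K s HHR : ℝ)
    (hB : B = (2 : ℝ) ^ (⌈Real.logb 2 (min (Real.exp ε) (2 * (k : ℝ)))⌉ - 1))
    (hb : b = (2 : ℝ) ^ ⌈Real.logb 2 ((k : ℝ) / B + 1)⌉)
    (hK : K = B * b) (hs : s = b / 2)
    (hHHR : HHR = Real.log (s * Real.exp ε + K - s) -
      ε * Real.exp ε * s / (s * Real.exp ε + K - s)) :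
    (ε ≤ Real.log k + 1 →
      HHR ≤ Real.log (2 * (k : ℝ) * (3 * Real.exp ε - 1) / Real.exp ε) -
        ε * Real.exp ε / (3 * Real.exp ε - 1)) ∧
    (Real.log k + 1 < ε →
      HHR ≤ Real.log (Real.exp ε + 4 * (k : ℝ) - 1) -
        ε * Real.exp ε / (Real.exp ε + 4 * (k : ℝ) - 1)) := by
  have hk' : (2 : ℝ) ≤ k := by exact_mod_cast hk
  have hm : 1 < min (exp ε) (2 * k) := lt_min (one_lt_exp_iff.mpr hε) (by linarith)
  have hBm : B < min (exp ε) (2 * k) := hB ▸ two_zpow_ceil_logb_sub_one_lt (by linarith)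
  have hmB : min (exp ε) (2 * k) ≤ 2 * B := hB ▸ le_two_mul_two_zpow_ceil_logb_sub_one (by linarith)
  have hB12 : B = 1 ∨ 2 ≤ B := hB ▸ two_zpow_ceil_logb_sub_one_eq_one_or_two_le hm
  have hB0 : 0 < B := by rcases hB12 with h | h <;> linarith
  have hs' : s = 2 ^ (⌈logb 2 (k / B + 1)⌉ - 1) := by
    rw [hs, hb, zpow_sub_one₀ two_ne_zero, div_eq_mul_inv]
  have hx : 1 < k / B + 1 := by linarith [show 0 < k / B by positivity]
  have hsB : s < k / B + 1 := hs' ▸ two_zpow_ceil_logb_sub_one_lt (by linarith)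
  have hs12 : s = 1 ∨ 2 ≤ s := hs' ▸ two_zpow_ceil_logb_sub_one_eq_one_or_two_le hx
  have hH : HHR = hrKeyEntropy ε s B := by
    have hs0 : s ≠ 0 := by rcases hs12 with h | h <;> linarith
    rw [hHHR, hrKeyEntropy, show s * exp ε + K - s = s * (exp ε - 1 + 2 * B) by
      rw [hK, hs]; ring]
    congr 1
    field_simp
  have hexp : exp (log k + 1) = k * exp 1 := by rw [exp_add, exp_log (by linarith)]
  rw [hH]
  refine ⟨fun hεk ↦ ?_, fun hkε ↦ ?_⟩
  · have hEk : exp ε ≤ k * exp 1 := hexp ▸ exp_le_exp.mpr hεk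
    exact (hrKeyEntropy_le_of_exp_le hε hk' hEk hBm hmB hB12 hsB hs12).trans_eq
      (by rw [hrKeyEntropy]; ring_nf)
  · have hkE : 2 * k < exp ε := by
      nlinarith [hexp ▸ exp_lt_exp.mpr hkε, exp_one_gt_d9]
    exact (hrKeyEntropy_le_of_two_mul_lt_exp hε.le hkE hBm hmB hB0 hsB hs12).trans_eq
      (by rw [hrKeyEntropy]; ring_nf)
end
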